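/- (Existence of special convex combinations along a block sequence) Let (y_k)_{k=1}^∞ be a block sequence in c_00, ε > 0 and n ∈ ℕ. Then there is a finite interval E ⊆ ℕ and nonnegative coefficients (b_k)_{k∈E} with ∑_{k∈E} b_k^2 = 1 such that ∑_{k∈E} b_k y_k is a (2, ε, n)-special convex combination, i.e. ∑_{k∈E} b_k e_{t_k} with t_k = maxsupp y_k is a (2, ε, n)-basic special convex combination. -/

import Mathlib

/-- The first Schreier family: finite sets `F` with `|F| ≤ min F`. -/
def SchreierOne : Set (Finset ℕ) := {F | ∀ k ∈ F, F.card ≤ k}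

/-- The minimum of a finite set of naturals (0 for the empty set). -/
noncomputable def finMin (F : Finset ℕ) : ℕ := sInf {k | k ∈ F}

/-- The convolution `P[Q]` of two families of finite subsets of ℕ:
unions of successive members of `Q` whose minima form a set in `P`. -/
def conv (P Q : Set (Finset ℕ)) : Set (Finset ℕ) :=
  {U | ∃ (d : ℕ) (F : Fin d → Finset ℕ),
    (∀ i, F i ∈ Q) ∧ (∀ i, (F i).Nonempty) ∧
    (∀ i j : Fin d, i < j → ∀ a ∈ F i, ∀ b ∈ F j, a < b) ∧
    (Finset.univ.image fun i => finMin (F i)) ∈ P ∧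
    U = Finset.univ.biUnion F}

/-- The modified convolution `P[Q]_M`: unions of pairwise disjoint members of `Q`
whose minima form a set in `P`. -/
def mconv (P Q : Set (Finset ℕ)) : Set (Finset ℕ) :=
  {U | ∃ (d : ℕ) (F : Fin d → Finset ℕ),
    (∀ i, F i ∈ Q) ∧ (∀ i, (F i).Nonempty) ∧
    (∀ i j : Fin d, i ≠ j → Disjoint (F i) (F j)) ∧
    (Finset.univ.image fun i => finMin (F i)) ∈ P ∧
    U = Finset.univ.biUnion F}

/-- The Schreier families `S_n` (indexed so that `Schreier 1 = S_1`,
`Schreier (n+1) = S_1[S_n]`). -/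
def Schreier : ℕ → Set (Finset ℕ)
  | 0 => {F | F.card ≤ 1}
  | 1 => SchreierOne
  | (n+2) => conv SchreierOne (Schreier (n+1))

/-- The modified Schreier families `S^M_n`. -/
def SchreierM : ℕ → Set (Finset ℕ)
  | 0 => {F | F.card ≤ 1}
  | 1 => SchreierOne
  | (n+2) => mconv SchreierOne (SchreierM (n+1))

/-- The maximum of the support of an element of `c_00` (0 if empty). -/
noncomputable def maxsupp (f : ℕ →₀ ℝ) : ℕ := sSup {k | f k ≠ 0}

/-- The minimum of the support of an element of `c_00` (0 if empty). -/
noncomputable def minsupp (f : ℕ →₀ ℝ) : ℕ := sInf {k | f k ≠ 0}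

/-!
The weights are repeated averages. At level `1` take the uniform average of the `t a` terms
starting at `a`; at level `n + 1` average `t a` consecutive level-`n` combinations, the `i`-th one
on `[A i, A (i + 1))`. Every block has at least `t (A i)` terms, hence `t (A (i + 1)) ≥ 2 t (A i)`.
A set of `S_m`, `m < n`, receives mass at most `8 / t (A i)` from block `i`. A set `G ∈ S_n` is a
union of at most `min G` sets of `S_{n-1}`: it receives mass at most `1` from each of the first
three blocks it meets and a geometrically decaying mass from the later ones. Square roots of the
weights of such a combination with `8 / t a < ε ^ 2` give the required coefficients.
-/

open Finset

lemma two_pow_mul_le_of_two_mul_le {u : ℕ → ℝ} (hu : ∀ i, 2 * u i ≤ u (i + 1)) (k i : ℕ) :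
    2 ^ i * u k ≤ u (k + i) := by
  induction i with
  | zero => simp
  | succ i ih => rw [pow_succ', mul_assoc, ← add_assoc]; linarith [hu (k + i)]

/-- Three terms are bounded by `1`, the later ones by a geometric series. -/
lemma sum_range_le_seven {u x : ℕ → ℝ} {g : ℝ} (hu0 : 0 < u 0) (hu : ∀ i, 2 * u i ≤ u (i + 1))
    (hx0 : ∀ i, 0 ≤ x i) (hx1 : ∀ i, x i ≤ 1) (hxu : ∀ i, x i ≤ g * (8 / u i))
    (hxg : ∀ i, u (i + 1) ≤ g → x i = 0) (d : ℕ) :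
    ∑ i ∈ range d, x i ≤ 7 := by
  by_cases h : ∃ j, g < u (j + 1)
  swap
  · push Not at h
    simp [hxg _ (h _)]
  set j := Nat.find h
  have hgj : g < u (j + 1) := Nat.find_spec h
  have hpos : ∀ i, 0 < u i := fun i => by
    have := two_pow_mul_le_of_two_mul_le hu 0 i
    rw [zero_add] at this
    exact (by positivity : (0 : ℝ) < 2 ^ i * u 0).trans_le this
  have hhead : ∀ i ∈ range j, x i = 0 := fun i hi =>
    hxg i (not_lt.1 (Nat.find_min h (mem_range.1 hi)))
  have htail : ∀ i, x (j + 3 + i) ≤ 2 * (1 / 2) ^ i := fun i => by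
    have hgrow : 2 ^ (i + 2) * u (j + 1) ≤ u (j + 3 + i) := by
      convert two_pow_mul_le_of_two_mul_le hu (j + 1) (i + 2) using 2; ring
    refine (hxu _).trans ?_
    rw [mul_div_assoc', div_le_iff₀ (hpos _)]
    calc g * 8 ≤ u (j + 1) * 8 := by linarith
      _ = 2 * (1 / 2) ^ i * (2 ^ (i + 2) * u (j + 1)) := by
        have : (1 / 2 : ℝ) ^ i * 2 ^ i = 1 := by rw [← mul_pow]; norm_num
        rw [pow_add]; linear_combination (-8 * u (j + 1)) * this
      _ ≤ 2 * (1 / 2) ^ i * u (j + 3 + i) := by gcongr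
  calc ∑ i ∈ range d, x i ≤ ∑ i ∈ range (j + 3 + d), x i :=
        sum_le_sum_of_subset_of_nonneg (range_subset_range.2 (by omega)) fun i _ _ => hx0 i
    _ = ∑ i ∈ range j, x i + ∑ i ∈ range 3, x (j + i) + ∑ i ∈ range d, x (j + 3 + i) := by
        rw [sum_range_add, sum_range_add]
    _ ≤ 0 + 3 + ∑ i ∈ range d, 2 * (1 / 2) ^ i := by
        gcongr with i
        · exact (sum_eq_zero hhead).le
        · simpa using sum_le_sum fun i (_ : i ∈ range 3) => hx1 (j + i)
        · exact htail i
    _ ≤ 7 := by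
        rw [← mul_sum]; linarith [sum_geometric_two_le d]

lemma sum_filter_sum_ite_mem {α ι M : Type*} [DecidableEq α] [AddCommMonoid M] {s : Finset α}
    {I : Finset ι} {B : ι → Finset α} (hB : ∀ i ∈ I, B i ⊆ s) (p : α → Prop) [DecidablePred p]
    (f : ι → α → M) :
    ∑ k ∈ s with p k, ∑ i ∈ I, (if k ∈ B i then f i k else 0) =
      ∑ i ∈ I, ∑ k ∈ B i with p k, f i k := by
  rw [sum_comm]
  refine sum_congr rfl fun i hi => ?_
  rw [sum_ite_mem, filter_inter, inter_eq_right.2 (hB i hi)]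

lemma Ico_eq_biUnion_Ico {A : ℕ → ℕ} (hA : Monotone A) (d : ℕ) :
    Ico (A 0) (A d) = (range d).biUnion fun i => Ico (A i) (A (i + 1)) := by
  induction d with
  | zero => simp
  | succ d ih =>
    rw [range_add_one, biUnion_insert, ← ih, union_comm,
      Ico_union_Ico_eq_Ico (hA (Nat.zero_le d)) (hA d.le_succ)]

lemma finMin_le {F : Finset ℕ} {x : ℕ} (hx : x ∈ F) : finMin F ≤ x :=
  Nat.sInf_le hx

lemma finMin_mem {F : Finset ℕ} (hF : F.Nonempty) : finMin F ∈ F :=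
  Nat.sInf_mem hF

lemma finMin_image_Ico {t : ℕ → ℕ} (ht : StrictMono t) {a b : ℕ} (hab : a < b) :
    finMin ((Ico a b).image t) = t a := by
  refine le_antisymm (finMin_le (mem_image_of_mem t (left_mem_Ico.2 hab))) ?_
  obtain ⟨k, hk, hkt⟩ := mem_image.1 (finMin_mem ((nonempty_Ico.2 hab).image t))
  exact hkt ▸ ht.monotone (mem_Ico.1 hk).1

lemma exists_biUnion_of_mem_schreier_succ {n : ℕ} {G : Finset ℕ} (hG : G ∈ Schreier (n + 1)) :
    ∃ (r : ℕ) (P : Fin r → Finset ℕ),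
      (∀ s, P s ∈ Schreier n) ∧ G = univ.biUnion P ∧ ∀ x ∈ G, r ≤ x := by
  cases n with
  | zero =>
    refine ⟨G.card, fun s => {(G.equivFin.symm s : ℕ)}, fun s => by simp [Schreier], ?_, hG⟩
    ext x
    simp only [mem_biUnion, mem_univ, true_and, mem_singleton]
    exact ⟨fun hx => ⟨G.equivFin ⟨x, hx⟩, by simp⟩, by rintro ⟨s, rfl⟩; exact (G.equivFin.symm s).2⟩
  | succ n =>
    obtain ⟨d, F, hF, hne, hsucc, hmin, rfl⟩ := hG
    refine ⟨d, F, hF, rfl, fun x hx => ?_⟩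
    obtain ⟨i, -, hxi⟩ := mem_biUnion.1 hx
    have hinj : StrictMono fun i => finMin (F i) := fun i j hij =>
      hsucc i j hij _ (finMin_mem (hne i)) _ (finMin_mem (hne j))
    calc d = (univ.image fun i => finMin (F i)).card := by
          rw [card_image_of_injective _ hinj.injective, card_univ, Fintype.card_fin]
      _ ≤ finMin (F i) := hmin _ (mem_image_of_mem _ (mem_univ i))
      _ ≤ x := finMin_le hxi

/-- `μ` is a `(1, 8 / t a, n)`-basic special convex combination of the vectors `e_{t k}`,
`a ≤ k < b`, with at least `t a` terms. -/
structure IsBasicSCC (t : ℕ → ℕ) (n a b : ℕ) (μ : ℕ → ℝ) : Prop where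
  add_le : a + t a ≤ b
  nonneg : ∀ k, 0 ≤ μ k
  sum_eq_one : ∑ k ∈ Ico a b, μ k = 1
  image_mem : (Ico a b).image t ∈ Schreier n
  sum_filter_le : ∀ m < n, ∀ G ∈ Schreier m, ∑ k ∈ Ico a b with t k ∈ G, μ k ≤ 8 / t a

namespace IsBasicSCC

variable {t : ℕ → ℕ} {n a b : ℕ} {μ : ℕ → ℝ}

lemma sum_filter_le_one (h : IsBasicSCC t n a b μ) (p : ℕ → Prop) [DecidablePred p] :
    ∑ k ∈ Ico a b with p k, μ k ≤ 1 :=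
  h.sum_eq_one ▸ sum_le_sum_of_subset_of_nonneg (filter_subset _ _) fun k _ _ => h.nonneg k

lemma sum_filter_biUnion_le (h : IsBasicSCC t n a b μ) {m r : ℕ} (hm : m < n)
    {P : Fin r → Finset ℕ} (hP : ∀ s, P s ∈ Schreier m) :
    ∑ k ∈ Ico a b with t k ∈ univ.biUnion P, μ k ≤ r * (8 / t a) := by
  calc ∑ k ∈ Ico a b with t k ∈ univ.biUnion P, μ k
      ≤ ∑ k ∈ Ico a b, ∑ s, if t k ∈ P s then μ k else 0 := by
        rw [sum_filter]
        refine sum_le_sum fun k _ => ?_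
        split_ifs with hk
        · obtain ⟨s, -, hs⟩ := mem_biUnion.1 hk
          calc μ k = if t k ∈ P s then μ k else 0 := (if_pos hs).symm
            _ ≤ _ := single_le_sum (f := fun s => if t k ∈ P s then μ k else 0)
              (fun s _ => by split_ifs <;> simp [h.nonneg k]) (mem_univ s)
        · exact sum_nonneg fun s _ => by split_ifs <;> simp [h.nonneg k]
    _ = ∑ s, ∑ k ∈ Ico a b with t k ∈ P s, μ k := by
        rw [sum_comm]; simp only [sum_filter]
    _ ≤ ∑ _s : Fin r, 8 / (t a : ℝ) := sum_le_sum fun s _ => h.sum_filter_le m hm _ (hP s)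
    _ = r * (8 / t a) := by simp

end IsBasicSCC

lemma isBasicSCC_one {t : ℕ → ℕ} (ht : StrictMono t) {a : ℕ} (ha : 0 < t a) :
    IsBasicSCC t 1 a (a + t a) fun _ => 1 / t a := by
  have hcard : (Ico a (a + t a)).card = t a := by simp
  refine ⟨le_rfl, fun _ => by positivity, ?_, ?_, ?_⟩
  · rw [sum_const, hcard, nsmul_eq_mul]; field_simp
  · intro x hx
    obtain ⟨k, hk, rfl⟩ := mem_image.1 hx
    exact card_image_le.trans (hcard.trans_le (ht.monotone (mem_Ico.1 hk).1))
  · intro m hm G hG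
    obtain rfl : m = 0 := by omega
    have hG1 : ((Ico a (a + t a)).filter fun k => t k ∈ G).card ≤ 1 :=
      (card_le_card_of_injOn t (fun k hk => (mem_filter.1 hk).2) ht.injective.injOn).trans hG
    rw [sum_const, nsmul_eq_mul]
    calc _ ≤ (1 : ℝ) * (1 / t a) := by gcongr; exact_mod_cast hG1
      _ ≤ 8 / t a := by rw [one_mul]; gcongr; norm_num

section Chain

variable {t : ℕ → ℕ} {n : ℕ} {A : ℕ → ℕ} {M : ℕ → ℕ → ℝ}

lemma monotone_of_forall_isBasicSCC (hA : ∀ i, IsBasicSCC t n (A i) (A (i + 1)) (M i)) :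
    Monotone A :=
  monotone_nat_of_le_succ fun i => le_of_add_le_left (hA i).add_le

lemma two_mul_le_of_forall_isBasicSCC (ht : StrictMono t)
    (hA : ∀ i, IsBasicSCC t n (A i) (A (i + 1)) (M i)) (i : ℕ) :
    2 * t (A i) ≤ t (A (i + 1)) := by
  have := ht.add_le_nat (t (A i)) (A i)
  have := ht.monotone ((add_comm _ _).trans_le (hA i).add_le)
  omega

lemma image_Ico_mem_schreier_of_forall_isBasicSCC (ht : StrictMono t)
    (hA : ∀ i, IsBasicSCC t (n + 1) (A i) (A (i + 1)) (M i)) (ha : 0 < t (A 0)) :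
    (Ico (A 0) (A (t (A 0)))).image t ∈ Schreier (n + 2) := by
  have hAmono := monotone_of_forall_isBasicSCC hA
  have hAlt : ∀ i, A i < A (i + 1) := fun i => by
    have := (hA i).add_le
    have := ht.monotone (hAmono (Nat.zero_le i))
    omega
  refine ⟨t (A 0), fun i => (Ico (A i) (A (i + 1))).image t, fun i => (hA i).image_mem,
    fun i => (nonempty_Ico.2 (hAlt i)).image t, ?_, ?_, ?_⟩
  · intro i j hij x hx y hy
    obtain ⟨k, hk, rfl⟩ := mem_image.1 hx
    obtain ⟨l, hl, rfl⟩ := mem_image.1 hy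
    have := hAmono (show (i : ℕ) + 1 ≤ j from hij)
    exact ht (by simp only [mem_Ico] at hk hl; omega)
  · simp_rw [finMin_image_Ico ht (hAlt _)]
    intro x hx
    obtain ⟨i, -, rfl⟩ := mem_image.1 hx
    calc _ ≤ (univ : Finset (Fin (t (A 0)))).card := card_image_le
      _ = t (A 0) := by simp
      _ ≤ t (A i) := ht.monotone (hAmono (Nat.zero_le _))
  · rw [Ico_eq_biUnion_Ico hAmono, biUnion_image]
    ext x
    simp only [mem_biUnion, mem_range, mem_univ, true_and]
    exact ⟨fun ⟨i, hi, hx⟩ => ⟨⟨i, hi⟩, hx⟩, fun ⟨i, hx⟩ => ⟨i, i.2, hx⟩⟩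

lemma sum_range_sum_filter_le_of_forall_isBasicSCC (ht : StrictMono t)
    (hA : ∀ i, IsBasicSCC t (n + 1) (A i) (A (i + 1)) (M i)) (ha : 0 < t (A 0))
    {m : ℕ} (hm : m < n + 2) {G : Finset ℕ} (hG : G ∈ Schreier m) :
    ∑ i ∈ range (t (A 0)), ∑ k ∈ Ico (A i) (A (i + 1)) with t k ∈ G, M i k ≤ 8 := by
  have hAmono := monotone_of_forall_isBasicSCC hA
  rcases Nat.lt_succ_iff_lt_or_eq.1 hm with hm | rfl
  · calc _ ≤ ∑ i ∈ range (t (A 0)), 8 / (t (A 0) : ℝ) := sum_le_sum fun i _ =>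
          ((hA i).sum_filter_le m hm G hG).trans
            (by gcongr; exact ht.monotone (hAmono (Nat.zero_le i)))
      _ = 8 := by simp; field_simp
  · obtain ⟨r, P, hP, rfl, hr⟩ := exists_biUnion_of_mem_schreier_succ hG
    refine (sum_range_le_seven (u := fun i => (t (A i) : ℝ)) (g := r) (by exact_mod_cast ha)
      (fun i => by exact_mod_cast two_mul_le_of_forall_isBasicSCC ht hA i)
      (fun i => sum_nonneg fun k _ => (hA i).nonneg k) (fun i => (hA i).sum_filter_le_one _)
      (fun i => (hA i).sum_filter_biUnion_le n.lt_succ_self hP) (fun i hi => ?_) _).trans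
      (by norm_num)
    rw [filter_eq_empty_iff.2, sum_empty]
    intro k hk hkG
    have := hr _ hkG
    have := ht (mem_Ico.1 hk).2
    have : t (A (i + 1)) ≤ r := by exact_mod_cast hi
    omega

lemma isBasicSCC_average (ht : StrictMono t)
    (hA : ∀ i, IsBasicSCC t (n + 1) (A i) (A (i + 1)) (M i)) (ha : 0 < t (A 0)) :
    IsBasicSCC t (n + 2) (A 0) (A (t (A 0))) fun k =>
      (∑ i ∈ range (t (A 0)), if k ∈ Ico (A i) (A (i + 1)) then M i k else 0) / t (A 0) := by
  set d := t (A 0)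
  have hAmono := monotone_of_forall_isBasicSCC hA
  have hsum : ∀ (p : ℕ → Prop) [DecidablePred p],
      ∑ k ∈ Ico (A 0) (A d) with p k,
        (∑ i ∈ range d, if k ∈ Ico (A i) (A (i + 1)) then M i k else 0) / d =
      (∑ i ∈ range d, ∑ k ∈ Ico (A i) (A (i + 1)) with p k, M i k) / d := fun p _ => by
    rw [← sum_div, sum_filter_sum_ite_mem _ p M]
    intro i hi
    exact Ico_subset_Ico (hAmono (Nat.zero_le i)) (hAmono (mem_range.1 hi))
  refine ⟨(hA 0).add_le.trans (hAmono ha), fun k => ?_, ?_,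
    image_Ico_mem_schreier_of_forall_isBasicSCC ht hA ha, fun m hm G hG => ?_⟩
  · exact div_nonneg (sum_nonneg fun i _ => by split_ifs <;> simp [(hA i).nonneg k]) d.cast_nonneg
  · have := hsum fun _ => True
    simp only [filter_true] at this
    rw [this, sum_congr rfl fun i _ => (hA i).sum_eq_one]
    simp [ha.ne']
  · rw [hsum]
    exact div_le_div_of_nonneg_right
      (sum_range_sum_filter_le_of_forall_isBasicSCC ht hA ha hm hG) d.cast_nonneg

end Chain

lemma exists_isBasicSCC {t : ℕ → ℕ} (ht : StrictMono t) (n : ℕ) {a : ℕ} (ha : 0 < t a) :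
    ∃ b μ, IsBasicSCC t (n + 1) a b μ := by
  induction n generalizing a with
  | zero => exact ⟨_, _, isBasicSCC_one ht ha⟩
  | succ n ih =>
    choose! B M hBM using fun x (hx : 0 < t x) => ih hx
    have hpos : ∀ i, 0 < t (B^[i] a) := by
      intro i
      induction i with
      | zero => exact ha
      | succ i hi =>
        rw [Function.iterate_succ_apply']
        exact hi.trans_le (ht.monotone (le_of_add_le_left (hBM _ hi).add_le))
    refine ⟨_, _, isBasicSCC_average (A := fun i => B^[i] a) (M := fun i => M (B^[i] a)) ht
      (fun i => ?_) ha⟩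
    rw [Function.iterate_succ_apply']
    exact hBM _ (hpos i)

lemma minsupp_le_maxsupp {f : ℕ →₀ ℝ} (hf : f.support.Nonempty) : minsupp f ≤ maxsupp f := by
  have hs : {k | f k ≠ 0} = f.support := by ext; simp
  rw [minsupp, maxsupp, hs]
  exact csInf_le_csSup (by exact_mod_cast hf) (OrderBot.bddBelow _) f.support.bddAbove

/-- **Existence of special convex combinations.** Let `(y_k)` be a block
sequence in `c_00`, `ε > 0` and `n ≥ 1`.  Then there exist a finite interval `E ⊆ ℕ` and
nonnegative coefficients `(b_k)_{k∈E}` with `∑_{k∈E} b_k² = 1` such that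
`∑_{k∈E} b_k y_k` is a `(2, ε, n)`-special convex combination: with `t_k = maxsupp y_k`,
the set `{t_k : k ∈ E}` belongs to `S_n`, while `(∑_{k∈E, t_k∈G} b_k²)^{1/2} < ε` for
every `G ∈ S_m` with `m < n`. -/
theorem exists_scc (y : ℕ → ℕ →₀ ℝ)
    (hne : ∀ k, (y k).support.Nonempty)
    (hblock : ∀ k, maxsupp (y k) < minsupp (y (k + 1)))
    (ε : ℝ) (hε : 0 < ε) (n : ℕ) (hn : 1 ≤ n) :
    ∃ a c : ℕ, ∃ b : ℕ → ℝ,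
      (∀ k, 0 ≤ b k) ∧
      (∑ k ∈ Finset.Icc a c, (b k) ^ 2) = 1 ∧
      ((Finset.Icc a c).image fun k => maxsupp (y k)) ∈ Schreier n ∧
      ∀ m < n, ∀ G ∈ Schreier m,
        Real.sqrt (∑ k ∈ (Finset.Icc a c).filter (fun k => maxsupp (y k) ∈ G),
          (b k) ^ 2) < ε := by
  have ht : StrictMono fun k => maxsupp (y k) :=
    strictMono_nat_of_lt_succ fun k => (hblock k).trans_le (minsupp_le_maxsupp (hne (k + 1)))
  obtain ⟨n, rfl⟩ := Nat.exists_eq_add_of_le' hn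
  obtain ⟨a, ha⟩ := exists_nat_gt (8 / ε ^ 2)
  have hta : 8 / ε ^ 2 < maxsupp (y a) := ha.trans_le (by exact_mod_cast ht.id_le a)
  have htpos : 0 < maxsupp (y a) := by
    exact_mod_cast (by positivity : (0 : ℝ) ≤ 8 / ε ^ 2).trans_lt hta
  obtain ⟨b, μ, h⟩ := exists_isBasicSCC ht n htpos
  have hIcc : Icc a (b - 1) = Ico a b := by
    have := h.add_le
    rw [← Ico_add_one_right_eq_Icc, Nat.sub_add_cancel (by omega)]
  refine ⟨a, b - 1, fun k => √(μ k), fun k => Real.sqrt_nonneg _, ?_, ?_, fun m hm G hG => ?_⟩ <;>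
    simp only [hIcc, Real.sq_sqrt (h.nonneg _)]
  · exact h.sum_eq_one
  · exact h.image_mem
  · rw [Real.sqrt_lt' hε]
    refine (h.sum_filter_le m hm G hG).trans_lt ?_
    rwa [div_lt_comm₀ (by exact_mod_cast htpos) (by positivity)]
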